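/- Let X = G⟨c⟩ with G ≅ SD_{8n}, ⟨c⟩ cyclic, G ∩ ⟨c⟩ = 1, and let ⟨c⟩_X denote the core of ⟨c⟩ in X. If n is odd, then ⟨a⁴, c⟩ ≤ C_X(⟨c⟩_X) and [X : C_X(⟨c⟩_X)] ≤ 8; if n is even, then ⟨a², c⟩ ≤ C_X(⟨c⟩_X) and [X : C_X(⟨c⟩_X)] ≤ 4. -/

import Mathlib

/-!
The core `N` of `⟨c⟩` is a normal cyclic subgroup, so `X` acts on it through the abelian group
`Aut N`; hence `c` and every commutator centralize `N`. In `SD_{8n}` we have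
`⁅b⁻¹, a⁆ = a ^ (2n - 2)`, which together with `a ^ 4n = 1` puts `a ^ 4` (and `a ^ 2` when `n` is
even) into `C_X(N)`. As `⟨a ^ j⟩ ∩ ⟨c⟩ = 1`, the centralizer has at least `o(a ^ j) * m` elements,
while `|X| = 8nm`.
-/

open Pointwise Subgroup
open scoped commutatorElement

namespace Subgroup

variable {X : Type*} [Group X]

theorem zpow_mul_add_mul_mem {H : Subgroup X} {a : X} {k l : ℤ} (hk : a ^ k ∈ H)
    (hl : a ^ l ∈ H) (s t : ℤ) : a ^ (k * s + l * t) ∈ H := by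
  rw [zpow_add, zpow_mul, zpow_mul]
  exact mul_mem (zpow_mem hk s) (zpow_mem hl t)

theorem commutator_le_centralizer_of_isCyclic (N : Subgroup X) [N.Normal] [IsCyclic N] :
    _root_.commutator X ≤ centralizer (N : Set X) := by
  let _ : CommGroup (MulAut N) := (IsCyclic.mulAutMulEquiv N).toMonoidHom.commGroupOfInjective
    (IsCyclic.mulAutMulEquiv N).injective
  intro g hg x hx
  have hconj : MulAut.conjNormal g = 1 :=
    MonoidHom.mem_ker.1 (Abelianization.commutator_subset_ker (MulAut.conjNormal (H := N)) hg)
  have := congrArg (fun φ : MulAut N => ((φ ⟨x, hx⟩ : N) : X)) hconj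
  simp only [MulAut.conjNormal_apply, MulAut.one_apply, mul_inv_eq_iff_eq_mul] at this
  exact this.symm

theorem card_mul_card_le_of_inf_eq_bot [Finite X] {K L H : Subgroup X} (hK : K ≤ H) (hL : L ≤ H)
    (hKL : K ⊓ L = ⊥) : Nat.card K * Nat.card L ≤ Nat.card H := by
  have hcard : Nat.card K * K.relIndex H = Nat.card H := by
    simpa only [relIndex_bot_left] using relIndex_mul_relIndex ⊥ K H bot_le hK
  calc Nat.card K * Nat.card L = Nat.card K * K.relIndex L := by
        rw [← inf_relIndex_right, hKL, relIndex_bot_left]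
    _ ≤ Nat.card K * K.relIndex H := Nat.mul_le_mul_left _
      (relIndex_le_of_le_right hL (isFiniteRelIndex_of_finiteIndex (K := H)).relIndex_ne_zero)
    _ = Nat.card H := hcard

theorem index_le_of_mem_of_inf_zpowers_eq_bot [Finite X] {C : Subgroup X} {x y : X}
    (hx : x ∈ C) (hy : y ∈ C) (hxy : zpowers x ⊓ zpowers y = ⊥) {r : ℕ}
    (hr : Nat.card X ≤ r * (orderOf x * orderOf y)) : C.index ≤ r := by
  have hle : orderOf x * orderOf y ≤ Nat.card C := by
    simpa only [Nat.card_zpowers] using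
      card_mul_card_le_of_inf_eq_bot (zpowers_le.2 hx) (zpowers_le.2 hy) hxy
  refine Nat.le_of_mul_le_mul_left ?_ (Nat.card_pos (α := C))
  calc Nat.card C * C.index = Nat.card X := card_mul_index C
    _ ≤ r * (orderOf x * orderOf y) := hr
    _ ≤ Nat.card C * r := by rw [mul_comm]; exact Nat.mul_le_mul_right r hle

end Subgroup

section Semidihedral

variable {X : Type*} [Group X]

theorem commutatorElement_inv_left_eq_zpow {a b : X} {n : ℕ} (hn : 0 < n)
    (hab : b⁻¹ * a * b = a ^ (2 * n - 1)) : ⁅b⁻¹, a⁆ = a ^ (2 * (n : ℤ) - 2) := by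
  rw [commutatorElement_def, inv_inv, hab, ← zpow_natCast, ← zpow_neg_one, ← zpow_add]
  congr 1
  omega

variable {H : Subgroup X} {a : X} {n : ℕ}

theorem pow_four_mem_of_zpow_two_mul_sub_two_mem (ha : a ^ (4 * n) = 1)
    (h : a ^ (2 * (n : ℤ) - 2) ∈ H) : a ^ 4 ∈ H := by
  have hone : a ^ (4 * (n : ℤ)) ∈ H := by exact_mod_cast ha ▸ one_mem H
  convert zpow_mul_add_mul_mem h hone (-2) 1 using 1
  rw [← zpow_natCast]
  congr 1
  ring

theorem pow_two_mem_of_zpow_two_mul_sub_two_mem (hn : Even n) (ha : a ^ (4 * n) = 1)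
    (h : a ^ (2 * (n : ℤ) - 2) ∈ H) : a ^ 2 ∈ H := by
  obtain ⟨t, rfl⟩ := hn
  have hone : a ^ (4 * ((t + t : ℕ) : ℤ)) ∈ H := by exact_mod_cast ha ▸ one_mem H
  convert zpow_mul_add_mul_mem h hone (-(2 * t + 1)) t using 1
  rw [← zpow_natCast]
  congr 1
  push_cast
  ring

end Semidihedral

theorem stmt15_general {X : Type*} [Group X] [Finite X] (n m : ℕ)
    (a b c : X)
    (ha : orderOf a = 4 * n)
    (hab : b⁻¹ * a * b = a ^ (2 * n - 1))
    (hG : Nat.card (closure ({a, b} : Set X)) = 8 * n)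
    (hc : orderOf c = m)
    (hprod : (closure ({a, b} : Set X) : Set X) * (zpowers c : Set X) = Set.univ)
    (hint : closure ({a, b} : Set X) ⊓ zpowers c = ⊥) :
    (Odd n →
      closure ({a ^ 4, c} : Set X) ≤
        Subgroup.centralizer (((zpowers c).normalCore : Subgroup X) : Set X) ∧
      (Subgroup.centralizer (((zpowers c).normalCore : Subgroup X) : Set X)).index ≤ 8) ∧
    (Even n →
      closure ({a ^ 2, c} : Set X) ≤
        Subgroup.centralizer (((zpowers c).normalCore : Subgroup X) : Set X) ∧
      (Subgroup.centralizer (((zpowers c).normalCore : Subgroup X) : Set X)).index ≤ 4) := by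
  set N := (zpowers c).normalCore
  set C := centralizer (N : Set X)
  have : IsCyclic N := isCyclic_of_le (normalCore_le _)
  have hcC : c ∈ C := centralizer_le (normalCore_le _) (le_centralizer _ (mem_zpowers c))
  have hcomm : a ^ (2 * (n : ℤ) - 2) ∈ C :=
    commutatorElement_inv_left_eq_zpow (by have := orderOf_pos a; omega) hab ▸
      commutator_le_centralizer_of_isCyclic N (commutator_mem_commutator (mem_top _) (mem_top _))
  have ha4n : a ^ (4 * n) = 1 := ha ▸ pow_orderOf_eq_one a
  have hcard : Nat.card X = 8 * n * m := by
    rw [← (isComplement'_of_disjoint_and_mul_eq_univ (disjoint_iff.2 hint) hprod).card_mul_card,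
      hG, Nat.card_zpowers, hc]
  have hbound : ∀ j r : ℕ, a ^ j ∈ C → Nat.card X ≤ r * (orderOf (a ^ j) * m) →
      closure {a ^ j, c} ≤ C ∧ C.index ≤ r := by
    intro j r hj hr
    have hdisj : zpowers (a ^ j) ⊓ zpowers c = ⊥ := le_bot_iff.1 <| hint ▸
      inf_le_inf_right _ (zpowers_le.2 (pow_mem (subset_closure (by simp)) j))
    exact ⟨(closure_le C).2 (Set.insert_subset hj (Set.singleton_subset_iff.2 hcC)),
      index_le_of_mem_of_inf_zpowers_eq_bot hj hcC hdisj (hc ▸ hr)⟩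
  refine ⟨fun _ => hbound 4 8 (pow_four_mem_of_zpow_two_mul_sub_two_mem ha4n hcomm) ?_,
    fun hev => hbound 2 4 (pow_two_mem_of_zpow_two_mul_sub_two_mem hev ha4n hcomm) ?_⟩
  · rw [orderOf_pow_of_dvd (by norm_num) (ha ▸ dvd_mul_right 4 n), ha, hcard,
      Nat.mul_div_cancel_left n (by norm_num)]
    exact le_of_eq (by ring)
  · rw [orderOf_pow_of_dvd (by norm_num) (ha ▸ dvd_mul_of_dvd_left (by norm_num) n), ha, hcard,
      show 4 * n / 2 = 2 * n by omega]
    exact le_of_eq (by ring)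

theorem stmt15 {X : Type*} [Group X] [Finite X] (n m : ℕ) (hn : 2 ≤ n) (hm : 2 ≤ m)
    (a b c : X)
    (ha : orderOf a = 4 * n) (hb : orderOf b = 2)
    (hab : b⁻¹ * a * b = a ^ (2 * n - 1))
    (hG : Nat.card (closure ({a, b} : Set X)) = 8 * n)
    (hc : orderOf c = m)
    (hprod : (closure ({a, b} : Set X) : Set X) * (zpowers c : Set X) = Set.univ)
    (hint : closure ({a, b} : Set X) ⊓ zpowers c = ⊥) :
    (Odd n →
      closure ({a ^ 4, c} : Set X) ≤
        Subgroup.centralizer (((zpowers c).normalCore : Subgroup X) : Set X) ∧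
      (Subgroup.centralizer (((zpowers c).normalCore : Subgroup X) : Set X)).index ≤ 8) ∧
    (Even n →
      closure ({a ^ 2, c} : Set X) ≤
        Subgroup.centralizer (((zpowers c).normalCore : Subgroup X) : Set X) ∧
      (Subgroup.centralizer (((zpowers c).normalCore : Subgroup X) : Set X)).index ≤ 4) :=
  stmt15_general n m a b c ha hab hG hc hprod hint
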